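/- arXiv:0806.3984 — 2 statements merged into one kernel-verified Lean document; each statement's English description precedes it below -/
import Mathlib

section
/- Let Ω^{A'B'AB} = (1/d²) Σ_{j,k} |j⟩⟨j|^{A'} ⊗ |k⟩⟨k|^{B'} ⊗ ρ_{jk}^{AB}, where ρ_{jk} = (X^j Z^k ⊗ I) ρ^{AB} (X^j Z^k ⊗ I)† for a state ρ^{AB} with dim A = d. Then S(A'|AB)_Ω = S(Z^A|B)_ρ, where S(Z^A|B)_ρ = S(ρ̄_{Z}^{AB}) − S(ρ^B) and ρ̄_Z^{AB} is ρ^{AB} dephased on A in the Z eigenbasis. -/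
open Matrix Kronecker ComplexOrder

noncomputable section

/-- ω = e^{2πi/d} -/
noncomputable def qomega (d : ℕ) : ℂ := Complex.exp (2 * Real.pi * Complex.I / d)

/-- Generalized Pauli Z: Z|k⟩ = ω^k |k⟩. -/
noncomputable def pauliZ (d : ℕ) : Matrix (Fin d) (Fin d) ℂ :=
  Matrix.diagonal fun k : Fin d => qomega d ^ (k : ℕ)

/-- Generalized Pauli X: X|k⟩ = |k+1 mod d⟩. -/
noncomputable def pauliX (d : ℕ) [NeZero d] : Matrix (Fin d) (Fin d) ℂ :=
  Matrix.of fun i j : Fin d => if i = j + 1 then 1 else 0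

/-- Fourier matrix: column j is |x̃_j⟩ = (1/√d) Σ_k ω^{jk} |k⟩. -/
noncomputable def fourierMat (d : ℕ) : Matrix (Fin d) (Fin d) ℂ :=
  Matrix.of fun k j : Fin d => qomega d ^ ((j : ℕ) * (k : ℕ)) / (Real.sqrt d : ℂ)

/-- density operator predicate -/
def IsDensity {n : Type*} [Fintype n] (ρ : Matrix n n ℂ) : Prop :=
  ρ.PosSemidef ∧ ρ.trace = 1

/-- von Neumann entropy in base 2, via eigenvalues. -/
noncomputable def vN {n : Type*} [Fintype n] [DecidableEq n] (ρ : Matrix n n ℂ) : ℝ :=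
  if h : ρ.IsHermitian then ∑ i, -(h.eigenvalues i * Real.logb 2 (h.eigenvalues i)) else 0

/-- complete dephasing in the standard basis -/
def dephase {n : Type*} [DecidableEq n] (M : Matrix n n ℂ) : Matrix n n ℂ :=
  Matrix.of fun i j => if i = j then M i j else 0

/-- dephasing of the first (A) factor of a bipartite state, standard (Z eigen-) basis -/
def dephaseA {a b : Type*} [DecidableEq a] (M : Matrix (a × b) (a × b) ℂ) :
    Matrix (a × b) (a × b) ℂ :=
  Matrix.of fun p q => if p.1 = q.1 then M p q else 0

/-- dephasing of the first (A) factor in the Fourier (X eigen-) basis -/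
noncomputable def dephaseXA (d : ℕ) {b : Type*} [Fintype b] [DecidableEq b]
    (M : Matrix (Fin d × b) (Fin d × b) ℂ) : Matrix (Fin d × b) (Fin d × b) ℂ :=
  (fourierMat d ⊗ₖ (1 : Matrix b b ℂ)) *
    dephaseA ((fourierMat d ⊗ₖ (1 : Matrix b b ℂ))ᴴ * M * (fourierMat d ⊗ₖ (1 : Matrix b b ℂ))) *
    (fourierMat d ⊗ₖ (1 : Matrix b b ℂ))ᴴ

/-- reduced state on A of a bipartite state -/
def r2A {a b : Type*} [Fintype b] (M : Matrix (a × b) (a × b) ℂ) : Matrix a a ℂ :=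
  Matrix.of fun i j => ∑ y : b, M (i, y) (j, y)

/-- reduced state on B of a bipartite state -/
def r2B {a b : Type*} [Fintype a] (M : Matrix (a × b) (a × b) ℂ) : Matrix b b ℂ :=
  Matrix.of fun i j => ∑ x : a, M (x, i) (x, j)

/-- reduced state on AB of a tripartite state on A ⊗ B ⊗ E -/
def rAB {a b e : Type*} [Fintype e] (M : Matrix (a × b × e) (a × b × e) ℂ) :
    Matrix (a × b) (a × b) ℂ :=
  Matrix.of fun p q => ∑ x : e, M (p.1, p.2, x) (q.1, q.2, x)

/-- reduced state on AE of a tripartite state -/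
def rAE {a b e : Type*} [Fintype b] (M : Matrix (a × b × e) (a × b × e) ℂ) :
    Matrix (a × e) (a × e) ℂ :=
  Matrix.of fun p q => ∑ y : b, M (p.1, y, p.2) (q.1, y, q.2)

/-- reduced state on A of a tripartite state -/
def rA {a b e : Type*} [Fintype b] [Fintype e] (M : Matrix (a × b × e) (a × b × e) ℂ) :
    Matrix a a ℂ :=
  Matrix.of fun i j => ∑ y : b, ∑ x : e, M (i, y, x) (j, y, x)

/-- reduced state on B of a tripartite state -/
def rB {a b e : Type*} [Fintype a] [Fintype e] (M : Matrix (a × b × e) (a × b × e) ℂ) :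
    Matrix b b ℂ :=
  Matrix.of fun i j => ∑ x : a, ∑ z : e, M (x, i, z) (x, j, z)

/-- reduced state on E of a tripartite state -/
def rE {a b e : Type*} [Fintype a] [Fintype b] (M : Matrix (a × b × e) (a × b × e) ℂ) :
    Matrix e e ℂ :=
  Matrix.of fun i j => ∑ x : a, ∑ y : b, M (x, y, i) (x, y, j)

/-- matrix logarithm (base 2) of a Hermitian matrix via spectral decomposition -/
noncomputable def mlog {n : Type*} [Fintype n] [DecidableEq n] (M : Matrix n n ℂ) :
    Matrix n n ℂ :=
  if h : M.IsHermitian then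
    (h.eigenvectorUnitary : Matrix n n ℂ) *
      Matrix.diagonal (fun i => (Real.logb 2 (h.eigenvalues i) : ℂ)) *
      (h.eigenvectorUnitary : Matrix n n ℂ)ᴴ
  else 0

/-- quantum relative entropy S(ρ‖σ) = Tr[ρ(log₂ρ − log₂σ)] -/
noncomputable def relEnt {n : Type*} [Fintype n] [DecidableEq n] (ρ σ : Matrix n n ℂ) : ℝ :=
  ((ρ * (mlog ρ - mlog σ)).trace).re

/-- trace norm of a Hermitian matrix -/
noncomputable def traceNorm {n : Type*} [Fintype n] [DecidableEq n] (M : Matrix n n ℂ) : ℝ :=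
  if h : M.IsHermitian then ∑ i, |h.eigenvalues i| else 0

/-! Tracing out `B'` averages `ρ_{jk}` over `k`, and this `Z`-twirl dephases `A`. Hence the `A'AB`
marginal of `Ω` is block diagonal with `d²` blocks `(1/d)·ρ_m`, where the `ρ_m = ⟨m|ρ|m⟩` are the
diagonal `A`-blocks of `ρ` and the shifts `X^j` make each `m` occur `d` times. Tracing out `A'` as
well leaves the full twirl `(1/d)·1 ⊗ ρ_B`, block diagonal with `d` blocks `(1/d)·ρ_B`. Entropies of
block diagonal matrices add up and `d·S(M/d) = S(M) + log d · tr M`, so the two entropies exceed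
`S(ρ̄_Z)` and `S(ρ_B)` by the same amount `log d · Σ_m tr ρ_m = log d · tr ρ_B`. -/

lemma sum_prod_sub {G M : Type*} [AddGroup G] [Fintype G] [AddCommMonoid M] (f : G → M) :
    ∑ p : G × G, f (p.2 - p.1) = Fintype.card G • ∑ g, f g := by
  rw [Fintype.sum_prod_type, ← Finset.card_univ, ← Finset.sum_const]
  exact Finset.sum_congr rfl fun x _ => Fintype.sum_equiv (Equiv.subRight x) _ _ fun _ => rfl

section Entropy
variable {n : Type*} [Fintype n] [DecidableEq n]

lemma vN_eq_sum_roots_charpoly {M : Matrix n n ℂ} (hM : M.IsHermitian) :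
    vN M = (M.charpoly.roots.map fun z => Real.negMulLog z.re).sum / Real.log 2 := by
  simp [vN, hM, hM.roots_charpoly_eq_eigenvalues, Real.negMulLog, Real.logb, Finset.sum_div,
    neg_div, mul_div_assoc]

lemma vN_reindex {m : Type*} [Fintype m] [DecidableEq m] (e : n ≃ m) {M : Matrix n n ℂ}
    (hM : M.IsHermitian) : vN (reindex e e M) = vN M := by
  rw [reindex_apply, vN_eq_sum_roots_charpoly (hM.submatrix _), vN_eq_sum_roots_charpoly hM,
    ← reindex_apply, charpoly_reindex]

theorem Matrix.charpoly_blockDiagonal {o R : Type*} [Fintype o] [DecidableEq o] [CommRing R]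
    (M : o → Matrix n n R) : (blockDiagonal M).charpoly = ∏ k, (M k).charpoly := by
  have : charmatrix (blockDiagonal M) = blockDiagonal fun k => charmatrix (M k) := by
    ext ⟨i, k⟩ ⟨j, k'⟩
    by_cases hk : k = k' <;> by_cases hij : i = j <;>
      simp [blockDiagonal_apply, hk, hij]
  rw [charpoly, this, det_blockDiagonal]
  rfl

lemma vN_blockDiagonal {o : Type*} [Fintype o] [DecidableEq o] {M : o → Matrix n n ℂ}
    (hM : ∀ k, (M k).IsHermitian) : vN (blockDiagonal M) = ∑ k, vN (M k) := by
  rw [vN_eq_sum_roots_charpoly (isHermitian_blockDiagonal_iff.mpr hM), charpoly_blockDiagonal,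
    Polynomial.roots_prod _ _ (Finset.prod_ne_zero_iff.mpr fun k _ => (M k).charpoly_monic.ne_zero),
    Multiset.map_bind, Multiset.sum_bind]
  exact (Finset.sum_div _ _ _).trans
    (Finset.sum_congr rfl fun k _ => (vN_eq_sum_roots_charpoly (hM k)).symm)

lemma vN_cfc {M : Matrix n n ℂ} (hM : M.IsHermitian) (f : ℝ → ℝ) :
    vN (cfc f M) = (∑ i, Real.negMulLog (f (hM.eigenvalues i))) / Real.log 2 := by
  rw [vN_eq_sum_roots_charpoly (cfc_predicate f M).isHermitian, hM.charpoly_cfc_eq,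
    Polynomial.roots_prod _ _ (Finset.prod_ne_zero_iff.mpr fun i _ => Polynomial.X_sub_C_ne_zero _)]
  simp only [Polynomial.roots_X_sub_C, Multiset.bind_singleton, Multiset.map_map]
  rfl

lemma vN_real_smul {M : Matrix n n ℂ} (hM : M.IsHermitian) (c : ℝ) :
    vN ((c : ℂ) • M) = c * vN M + Real.negMulLog c / Real.log 2 * M.trace.re := by
  have hsmul : (c : ℂ) • M = cfc (fun x => c * x) M := by
    rw [cfc_const_mul c (fun x => x) M, cfc_id' ℝ M, Complex.coe_smul]
  have hvN : vN M = (∑ i, Real.negMulLog (hM.eigenvalues i)) / Real.log 2 := by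
    simpa only [cfc_id' ℝ M] using vN_cfc hM fun x => x
  rw [hsmul, vN_cfc hM, hvN, hM.trace_eq_sum_eigenvalues]
  simp only [Real.negMulLog_mul, Finset.sum_add_distrib, ← Finset.mul_sum, ← Finset.sum_mul]
  rw [Complex.re_sum]
  simp only [← RCLike.re_to_complex, RCLike.ofReal_re]
  ring

lemma natCast_mul_vN_inv_smul {M : Matrix n n ℂ} (hM : M.IsHermitian) {d : ℕ} (hd : d ≠ 0) :
    d * vN ((d : ℂ)⁻¹ • M) = vN M + Real.logb 2 d * M.trace.re := by
  have hd' : (d : ℝ) ≠ 0 := Nat.cast_ne_zero.mpr hd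
  rw [show (d : ℂ)⁻¹ = (((d : ℝ)⁻¹ : ℝ) : ℂ) by push_cast; rfl, vN_real_smul hM,
    Real.negMulLog, Real.log_inv, Real.logb]
  field_simp

end Entropy

lemma dephaseA_eq_reindex_blockDiagonal {a b : Type*} [DecidableEq a]
    (ρ : Matrix (a × b) (a × b) ℂ) :
    dephaseA ρ = reindex (Equiv.prodComm _ _) (Equiv.prodComm _ _)
      (blockDiagonal fun x => ρ.submatrix (Prod.mk x) (Prod.mk x)) := by
  ext ⟨x, s⟩ ⟨x', s'⟩
  rcases eq_or_ne x x' with rfl | hx <;> simp [dephaseA, blockDiagonal_apply, *]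

lemma r2B_eq_sum_submatrix {a b : Type*} [Fintype a] (ρ : Matrix (a × b) (a × b) ℂ) :
    r2B ρ = ∑ x, ρ.submatrix (Prod.mk x) (Prod.mk x) := by
  ext s s'
  simp [r2B, Matrix.sum_apply]

section Pauli
variable {d : ℕ}

lemma star_qomega : star (qomega d) = (qomega d)⁻¹ := by
  rw [qomega, Complex.star_def, ← Complex.exp_conj, ← Complex.exp_neg]
  congr 1
  simp only [map_div₀, map_mul, Complex.conj_I, Complex.conj_ofReal, map_ofNat,
    Complex.conj_natCast]
  ring

lemma pauliZ_pow_apply (k : ℕ) (i i' : Fin d) :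
    (pauliZ d ^ k) i i' = if i' = i then qomega d ^ ((i : ℕ) * k) else 0 := by
  rw [pauliZ, diagonal_pow, diagonal_apply]
  split_ifs with h h' h' <;> simp_all [pow_mul]

variable [NeZero d]

lemma isPrimitiveRoot_qomega : IsPrimitiveRoot (qomega d) d :=
  Complex.isPrimitiveRoot_exp d (NeZero.ne d)

lemma sum_qomega_pow_mul_star (m m' : Fin d) :
    ∑ k : Fin d, qomega d ^ ((m : ℕ) * k) * star (qomega d ^ ((m' : ℕ) * k))
      = if m = m' then (d : ℂ) else 0 := by
  have hω := isPrimitiveRoot_qomega (d := d)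
  set ζ := qomega d ^ (m : ℕ) * (qomega d ^ (m' : ℕ))⁻¹
  have hterm (k : ℕ) : qomega d ^ ((m : ℕ) * k) * star (qomega d ^ ((m' : ℕ) * k)) = ζ ^ k := by
    rw [star_pow, star_qomega, mul_pow, pow_mul, pow_mul, inv_pow, inv_pow]
  simp only [hterm, Fin.sum_univ_eq_sum_range (ζ ^ ·)]
  split_ifs with h
  · simp [ζ, h, hω.ne_zero (NeZero.ne d)]
  · have hζ1 : ζ ≠ 1 := fun h1 =>
      h (Fin.ext (hω.pow_inj m.isLt m'.isLt (mul_inv_eq_one₀ (pow_ne_zero _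
        (hω.ne_zero (NeZero.ne d))) |>.mp h1)))
    have hζd : ζ ^ d = 1 := by
      rw [mul_pow, inv_pow, ← pow_mul, ← pow_mul, mul_comm (m : ℕ), mul_comm (m' : ℕ),
        pow_mul, pow_mul, hω.pow_eq_one, one_pow, one_pow, inv_one, mul_one]
    rw [geom_sum_eq hζ1, hζd, sub_self, zero_div]

open Fin.NatCast in
lemma pauliX_pow_apply (j : ℕ) (i i' : Fin d) :
    (pauliX d ^ j) i i' = if i' = i - j then 1 else 0 := by
  induction j generalizing i with
  | zero => simp [one_apply, eq_comm]
  | succ j ih =>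
    rw [pow_succ', mul_apply, Finset.sum_eq_single (i - 1)]
    · rw [ih, pauliX, of_apply, if_pos (sub_add_cancel i 1).symm, one_mul, sub_sub, Nat.cast_succ,
        add_comm]
    · intro c _ hc
      rw [pauliX, of_apply, if_neg (fun h => hc (eq_sub_of_add_eq h.symm)), zero_mul]
    · simp

lemma pauliX_pow_mul_pauliZ_pow_apply (j k : Fin d) (i i' : Fin d) :
    (pauliX d ^ (j : ℕ) * pauliZ d ^ (k : ℕ)) i i'
      = if i' = i - j then qomega d ^ (((i - j : Fin d) : ℕ) * k) else 0 := by
  simp only [mul_apply, pauliX_pow_apply, pauliZ_pow_apply, ite_mul, one_mul, zero_mul,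
    Finset.sum_ite_eq', Finset.mem_univ, if_true]
  split_ifs with h h' <;> simp_all

variable {b : Type*} [Fintype b] [DecidableEq b]

def pauliConj (j k : Fin d) (ρ : Matrix (Fin d × b) (Fin d × b) ℂ) :
    Matrix (Fin d × b) (Fin d × b) ℂ :=
  ((pauliX d ^ (j : ℕ) * pauliZ d ^ (k : ℕ)) ⊗ₖ (1 : Matrix b b ℂ)) * ρ *
    ((pauliX d ^ (j : ℕ) * pauliZ d ^ (k : ℕ)) ⊗ₖ (1 : Matrix b b ℂ))ᴴ

lemma pauliConj_apply (j k : Fin d) (ρ : Matrix (Fin d × b) (Fin d × b) ℂ) (i i' : Fin d)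
    (s s' : b) :
    pauliConj j k ρ (i, s) (i', s') = qomega d ^ (((i - j : Fin d) : ℕ) * k) *
      star (qomega d ^ (((i' - j : Fin d) : ℕ) * k)) * ρ (i - j, s) (i' - j, s') := by
  have hW (i : Fin d) (s : b) (p : Fin d × b) :
      ((pauliX d ^ (j : ℕ) * pauliZ d ^ (k : ℕ)) ⊗ₖ (1 : Matrix b b ℂ)) (i, s) p
        = if p = (i - j, s) then qomega d ^ (((i - j : Fin d) : ℕ) * k) else 0 := by
    obtain ⟨i', s'⟩ := p
    simp only [kroneckerMap_apply, pauliX_pow_mul_pauliZ_pow_apply, one_apply, Prod.mk.injEq]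
    split_ifs <;> simp_all
  simp only [pauliConj, mul_apply, conjTranspose_apply, hW, ite_mul, zero_mul,
    apply_ite (star : ℂ → ℂ), star_zero, mul_ite, mul_zero, Finset.sum_ite_eq', Finset.mem_univ,
    if_true]
  ring

lemma sum_pauliConj_apply (j : Fin d) (ρ : Matrix (Fin d × b) (Fin d × b) ℂ) (i i' : Fin d)
    (s s' : b) :
    ∑ k : Fin d, pauliConj j k ρ (i, s) (i', s')
      = if i = i' then (d : ℂ) * ρ (i - j, s) (i - j, s') else 0 := by
  simp only [pauliConj_apply, ← Finset.sum_mul, sum_qomega_pow_mul_star, sub_left_inj]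
  split_ifs with h
  · rw [h]
  · rw [zero_mul]

def pauliExtension (ρ : Matrix (Fin d × b) (Fin d × b) ℂ) :
    Matrix ((Fin d × Fin d) × Fin d × b) ((Fin d × Fin d) × Fin d × b) ℂ :=
  ((d : ℂ) ^ 2)⁻¹ • ∑ j : Fin d, ∑ k : Fin d,
    (single j j (1 : ℂ) ⊗ₖ single k k (1 : ℂ)) ⊗ₖ pauliConj j k ρ

lemma pauliExtension_apply (ρ : Matrix (Fin d × b) (Fin d × b) ℂ) (x y x' y' : Fin d)
    (p q : Fin d × b) :
    pauliExtension ρ ((x, y), p) ((x', y'), q)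
      = if x = x' ∧ y = y' then ((d : ℂ) ^ 2)⁻¹ * pauliConj x y ρ p q else 0 := by
  simp only [pauliExtension, Matrix.smul_apply, Matrix.sum_apply, kroneckerMap_apply, single_apply,
    smul_eq_mul]
  rw [Finset.sum_eq_single x (fun c _ hc => by simp [hc]) (by simp),
    Finset.sum_eq_single y (fun c _ hc => by simp [hc]) (by simp)]
  by_cases hx : x = x' <;> by_cases hy : y = y' <;> simp [hx, hy]

lemma sum_pauliExtension_apply (ρ : Matrix (Fin d × b) (Fin d × b) ℂ) (x x' i i' : Fin d)
    (s s' : b) :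
    ∑ y : Fin d, pauliExtension ρ ((x, y), (i, s)) ((x', y), (i', s'))
      = if x = x' ∧ i = i' then (d : ℂ)⁻¹ * ρ (i - x, s) (i - x, s') else 0 := by
  have hd : (d : ℂ) ≠ 0 := Nat.cast_ne_zero.mpr (NeZero.ne d)
  rcases eq_or_ne x x' with rfl | hx
  · simp only [pauliExtension_apply, and_self, if_true, true_and, ← Finset.mul_sum,
      sum_pauliConj_apply]
    split_ifs
    · field_simp
    · rw [mul_zero]
  · simp [pauliExtension_apply, hx]

lemma partialTrace_pauliExtension_eq_blockDiagonal (ρ : Matrix (Fin d × b) (Fin d × b) ℂ) :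
    (of fun p q : Fin d × Fin d × b =>
        ∑ y : Fin d, pauliExtension ρ ((p.1, y), p.2) ((q.1, y), q.2))
      = reindex ((Equiv.prodComm _ _).trans (Equiv.prodAssoc _ _ _))
          ((Equiv.prodComm _ _).trans (Equiv.prodAssoc _ _ _))
          (blockDiagonal fun xi : Fin d × Fin d =>
            (d : ℂ)⁻¹ • ρ.submatrix (Prod.mk (xi.2 - xi.1)) (Prod.mk (xi.2 - xi.1))) := by
  ext ⟨x, i, s⟩ ⟨x', i', s'⟩
  simp only [of_apply, sum_pauliExtension_apply, reindex_apply, submatrix_apply,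
    blockDiagonal_apply, Equiv.symm_trans_apply, Equiv.prodAssoc_symm_apply,
    Equiv.prodComm_symm, Equiv.prodComm_apply, Prod.swap_prod_mk, Prod.mk.injEq,
    Matrix.smul_apply, smul_eq_mul]

lemma partialTrace_partialTrace_pauliExtension (ρ : Matrix (Fin d × b) (Fin d × b) ℂ) :
    (of fun p q : Fin d × b =>
        ∑ x : Fin d, ∑ y : Fin d, pauliExtension ρ ((x, y), p) ((x, y), q))
      = reindex (Equiv.prodComm _ _) (Equiv.prodComm _ _)
          (blockDiagonal fun _ : Fin d => (d : ℂ)⁻¹ • r2B ρ) := by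
  ext ⟨i, s⟩ ⟨i', s'⟩
  simp only [of_apply, sum_pauliExtension_apply, true_and, reindex_apply, submatrix_apply,
    blockDiagonal_apply, Equiv.prodComm_symm, Equiv.prodComm_apply, Prod.swap_prod_mk,
    Matrix.smul_apply, smul_eq_mul, r2B]
  rcases eq_or_ne i i' with rfl | hi
  · simp only [if_true, ← Finset.mul_sum]
    congr 1
    exact Fintype.sum_equiv (Equiv.subLeft i) _ _ fun x => rfl
  · simp [hi]

lemma vN_sub_vN_pauliExtension {ρ : Matrix (Fin d × b) (Fin d × b) ℂ} (hρ : ρ.IsHermitian) :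
    vN (of fun p q : Fin d × Fin d × b => ∑ y, pauliExtension ρ ((p.1, y), p.2) ((q.1, y), q.2))
      - vN (of fun p q : Fin d × b => ∑ x, ∑ y, pauliExtension ρ ((x, y), p) ((x, y), q))
      = vN (dephaseA ρ) - vN (r2B ρ) := by
  set τ : Fin d → Matrix b b ℂ := fun x => ρ.submatrix (Prod.mk x) (Prod.mk x)
  have hτ (x : Fin d) : (τ x).IsHermitian := hρ.submatrix _
  have hB : (r2B ρ).IsHermitian := r2B_eq_sum_submatrix ρ ▸ isSelfAdjoint_sum _ fun x _ => hτ x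
  have hinv : IsSelfAdjoint ((d : ℂ)⁻¹) := (IsSelfAdjoint.natCast d).inv₀
  rw [partialTrace_pauliExtension_eq_blockDiagonal, partialTrace_partialTrace_pauliExtension,
    dephaseA_eq_reindex_blockDiagonal,
    vN_reindex _ (isHermitian_blockDiagonal_iff.mpr fun _ => (hτ _).smul hinv),
    vN_reindex _ (isHermitian_blockDiagonal_iff.mpr fun _ => hB.smul hinv),
    vN_reindex _ (isHermitian_blockDiagonal_iff.mpr hτ),
    vN_blockDiagonal fun _ => (hτ _).smul hinv, vN_blockDiagonal fun _ => hB.smul hinv,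
    vN_blockDiagonal hτ, sum_prod_sub (fun x => vN ((d : ℂ)⁻¹ • τ x)), Finset.sum_const,
    Finset.card_univ, Fintype.card_fin, nsmul_eq_mul, nsmul_eq_mul, Finset.mul_sum,
    natCast_mul_vN_inv_smul hB (NeZero.ne d)]
  simp only [natCast_mul_vN_inv_smul (hτ _) (NeZero.ne d), Finset.sum_add_distrib,
    ← Finset.mul_sum, r2B_eq_sum_submatrix ρ, trace_sum, Complex.re_sum]
  ring

end Pauli

/-- for the classically-correlated extension
Ω = (1/d²) Σ_{jk} |j⟩⟨j| ⊗ |k⟩⟨k| ⊗ ρ_{jk} with ρ_{jk} = (X^jZ^k ⊗ 1)ρ(X^jZ^k ⊗ 1)†,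
one has S(A'|AB)_Ω = S(Z^A|B)_ρ. -/
theorem SApAB_eq_SZAB (d : ℕ) [NeZero d] {b : Type*} [Fintype b] [DecidableEq b]
    (ρ : Matrix (Fin d × b) (Fin d × b) ℂ) (hρ : IsDensity ρ) :
    (fun Ω : Matrix ((Fin d × Fin d) × Fin d × b) ((Fin d × Fin d) × Fin d × b) ℂ =>
      vN (Matrix.of fun p q : Fin d × Fin d × b =>
            ∑ y : Fin d, Ω ((p.1, y), p.2) ((q.1, y), q.2))
        - vN (Matrix.of fun p q : Fin d × b =>
            ∑ x : Fin d, ∑ y : Fin d, Ω ((x, y), p) ((x, y), q)))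
      ((((d : ℂ)) ^ 2)⁻¹ • ∑ j : Fin d, ∑ k : Fin d,
      (Matrix.single j j (1 : ℂ) ⊗ₖ Matrix.single k k (1 : ℂ)) ⊗ₖ
        (((pauliX d ^ (j : ℕ) * pauliZ d ^ (k : ℕ)) ⊗ₖ (1 : Matrix b b ℂ)) * ρ *
          ((pauliX d ^ (j : ℕ) * pauliZ d ^ (k : ℕ)) ⊗ₖ (1 : Matrix b b ℂ))ᴴ)
      : Matrix ((Fin d × Fin d) × Fin d × b) ((Fin d × Fin d) × Fin d × b) ℂ)
    = vN (dephaseA ρ) - vN (r2B ρ) :=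
  vN_sub_vN_pauliExtension hρ.1.1
end
end

section
/- Maassen–Uffink entropic uncertainty relation for mutually unbiased bases in dimension 2 (or for the Fourier-conjugate bases in dimension d): for any density operator ρ on ℂ^d, H(Z)_ρ + H(X)_ρ ≥ log₂ d, where H(Z)_ρ and H(X)_ρ are the Shannon entropies of the outcome distributions ⟨k|ρ|k⟩ and ⟨x̃_j|ρ|x̃_j⟩ in the standard and Fourier bases respectively. -/
open Matrix Kronecker ComplexOrder

noncomputable section

/-!
Maassen–Uffink via Riesz–Thorin. An isometry `M` whose entries are bounded by `c` has norm `1`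
from `ℓ²` to `ℓ²` and norm at most `c` from `ℓ¹` to `ℓ^∞`. Hadamard's three lines theorem, applied
to the pairing `⟨w, M v⟩` after the moduli of the entries of `w` and `v` are raised to a complex
power, interpolates between the two bounds: `‖M v‖_q ≤ c ^ θ * ‖v‖_p` for `p = 2 / (1 + θ)` and
`q = 2 / (1 - θ)`. For a unit vector both sides equal `1` at `θ = 0`, so comparing the derivatives
of their logarithms at `θ = 0` gives `H(|v|²) + H(|M v|²) ≥ -2 log c`. A mixed state is a convex
combination of its eigenvectors, and concavity of the Shannon entropy passes the bound on to it.
For the Fourier matrix `c = 1 / √d`.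
-/

theorem HasDerivAt.const_rpow_of_nonneg {f : ℝ → ℝ} {f' x a : ℝ} (ha : 0 ≤ a)
    (hf : HasDerivAt f f' x) (hfx : 0 < f x) :
    HasDerivAt (a ^ f ·) (Real.log a * f' * a ^ f x) x := by
  rcases ha.eq_or_lt with rfl | ha
  · have hzero : (fun y => (0 : ℝ) ^ f y) =ᶠ[nhds x] fun _ => 0 :=
      (continuousAt_const.eventually_lt hf.continuousAt hfx).mono fun y hy =>
        Real.zero_rpow hy.ne'
    simpa using (hasDerivAt_const x (0 : ℝ)).congr_of_eventuallyEq hzero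
  · exact hf.const_rpow ha

theorem HasDerivAt.nonneg_of_forall_mem_Ioo_le {g : ℝ → ℝ} {D a b : ℝ} (hg : HasDerivAt g D a)
    (hab : a < b) (hmin : ∀ x ∈ Set.Ioo a b, g a ≤ g x) : 0 ≤ D := by
  have hslope := (hasDerivAt_iff_tendsto_slope.mp hg).mono_left
    (nhdsWithin_mono a fun x (hx : x ∈ Set.Ioi a) => ne_of_gt hx)
  refine ge_of_tendsto hslope ?_
  filter_upwards [Ioo_mem_nhdsGT hab] with x hx
  rw [slope_def_field]
  exact div_nonneg (sub_nonneg.mpr (hmin x hx)) (sub_nonneg.mpr hx.1.le)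

namespace MaassenUffink

open Finset Real

lemma norm_qomega (d : ℕ) : ‖qomega d‖ = 1 := by
  rw [qomega, show 2 * Real.pi * Complex.I / d = ((2 * Real.pi / d : ℝ) : ℂ) * Complex.I by
    push_cast; ring]
  exact Complex.norm_exp_ofReal_mul_I _

lemma sum_pow_inv_mul_pow_pow {K : Type*} [Field K] {ζ : K} {d : ℕ} (hζ : IsPrimitiveRoot ζ d)
    (i j : Fin d) :
    ∑ k : Fin d, ((ζ ^ (i : ℕ))⁻¹ * ζ ^ (j : ℕ)) ^ (k : ℕ) = if i = j then (d : K) else 0 := by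
  have hζ0 : ζ ≠ 0 := hζ.ne_zero (Fin.pos i).ne'
  split_ifs with hij
  · simp [hij, inv_mul_cancel₀ (pow_ne_zero _ hζ0)]
  · set x := (ζ ^ (i : ℕ))⁻¹ * ζ ^ (j : ℕ)
    have hx : x ≠ 1 := fun h => hij <| Fin.ext <| hζ.pow_inj i.isLt j.isLt
      ((inv_mul_eq_one₀ (pow_ne_zero _ hζ0)).mp h)
    have hxd : x ^ d = 1 := by
      rw [mul_pow, inv_pow, ← pow_mul, ← pow_mul, mul_comm (i : ℕ), mul_comm (j : ℕ), pow_mul,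
        pow_mul, hζ.pow_eq_one, one_pow, one_pow, inv_one, one_mul]
    rw [Fin.sum_univ_eq_sum_range (x ^ ·), geom_sum_eq hx, hxd, sub_self, zero_div]

lemma fourierMat_conjTranspose_mul_self {d : ℕ} [NeZero d] :
    (fourierMat d)ᴴ * fourierMat d = 1 := by
  have hω : IsPrimitiveRoot (qomega d) d := Complex.isPrimitiveRoot_exp d (NeZero.ne d)
  have hconj : star (qomega d) = (qomega d)⁻¹ := (Complex.inv_eq_conj (norm_qomega d)).symm
  ext i j
  have hentry : ∀ k : Fin d, (fourierMat d)ᴴ i k * fourierMat d k j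
      = ((qomega d ^ (i : ℕ))⁻¹ * qomega d ^ (j : ℕ)) ^ (k : ℕ) / d := by
    intro k
    simp only [conjTranspose_apply, fourierMat, of_apply, star_div₀, star_pow, hconj,
      Complex.star_def, Complex.conj_ofReal]
    rw [div_mul_div_comm, ← Complex.ofReal_mul, Real.mul_self_sqrt d.cast_nonneg, mul_pow,
      inv_pow, inv_pow, ← pow_mul, ← pow_mul, Complex.ofReal_natCast]
  rw [mul_apply, sum_congr rfl fun k _ => hentry k, ← sum_div,
    sum_pow_inv_mul_pow_pow hω, Matrix.one_apply]
  split_ifs <;> simp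

lemma norm_fourierMat_apply (d : ℕ) (k j : Fin d) : ‖fourierMat d k j‖ = (Real.sqrt d)⁻¹ := by
  simp [fourierMat, norm_qomega, Real.sqrt_nonneg]

section LinearAlgebra

variable {ι κ : Type*} [Fintype ι]

lemma star_dotProduct_self_eq (u : ι → ℂ) : star u ⬝ᵥ u = ((∑ k, ‖u k‖ ^ 2 : ℝ) : ℂ) := by
  push_cast
  exact sum_congr rfl fun k _ => by rw [Pi.star_apply, Complex.star_def, Complex.conj_mul']

variable [DecidableEq ι]

lemma sum_norm_sq_mulVec [Fintype κ] {M : Matrix κ ι ℂ} (hM : Mᴴ * M = 1) (u : ι → ℂ) :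
    ∑ j, ‖(M *ᵥ u) j‖ ^ 2 = ∑ k, ‖u k‖ ^ 2 := by
  have h : star (M *ᵥ u) ⬝ᵥ M *ᵥ u = star u ⬝ᵥ u := by
    rw [star_mulVec, dotProduct_mulVec, vecMul_vecMul, hM, vecMul_one]
  rw [star_dotProduct_self_eq, star_dotProduct_self_eq] at h
  exact_mod_cast h

lemma re_mul_mul_conjTranspose_apply_self {ρ : Matrix ι ι ℂ} (hρ : ρ.IsHermitian)
    (A : Matrix κ ι ℂ) (j : κ) :
    ((A * ρ * Aᴴ) j j).re =
      ∑ i, hρ.eigenvalues i * ‖(A *ᵥ ⇑(hρ.eigenvectorBasis i)) j‖ ^ 2 := by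
  set U : Matrix ι ι ℂ := (hρ.eigenvectorUnitary : Matrix ι ι ℂ)
  have hAρA : A * ρ * Aᴴ = (A * U) * diagonal (fun i => (hρ.eigenvalues i : ℂ)) * (A * U)ᴴ := by
    conv_lhs => rw [hρ.spectral_theorem]
    simp only [Unitary.conjStarAlgAut_apply, conjTranspose_mul, star_eq_conjTranspose,
      Matrix.mul_assoc]
    rfl
  rw [hAρA, mul_apply, Complex.re_sum]
  refine sum_congr rfl fun i _ => ?_
  rw [mul_diagonal, conjTranspose_apply, mul_right_comm, Complex.star_def, Complex.mul_conj',
    ← Complex.ofReal_pow, ← Complex.ofReal_mul, Complex.ofReal_re, mul_comm]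
  rfl

lemma sum_norm_sq_eigenvectorBasis {ρ : Matrix ι ι ℂ} (hρ : ρ.IsHermitian) (i : ι) :
    ∑ k, ‖hρ.eigenvectorBasis i k‖ ^ 2 = 1 := by
  rw [← EuclideanSpace.norm_sq_eq, hρ.eigenvectorBasis.orthonormal.1 i, one_pow]

lemma sum_eigenvalues_eq_one {ρ : Matrix ι ι ℂ} (hρ : ρ.IsHermitian) (htr : ρ.trace = 1) :
    ∑ i, hρ.eigenvalues i = 1 := by
  simpa [htr] using congrArg Complex.re hρ.trace_eq_sum_eigenvalues.symm

end LinearAlgebra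

section RieszThorin

variable {ι κ : Type*}

lemma rpow_le_rpow_add_rpow {x a e b : ℝ} (hx : 0 ≤ x) (ha : 0 < a) (hae : a ≤ e) (heb : e ≤ b) :
    x ^ e ≤ x ^ a + x ^ b := by
  rcases le_total x 1 with hx1 | hx1
  · linarith [Real.rpow_le_rpow_of_exponent_ge' hx hx1 ha.le hae, Real.rpow_nonneg hx b]
  · linarith [Real.rpow_le_rpow_of_exponent_le hx1 heb, Real.rpow_nonneg hx a]

def phasePow (c e : ℂ) : ℂ := if c = 0 then 0 else c / ‖c‖ * (‖c‖ : ℂ) ^ e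

lemma phasePow_one (c : ℂ) : phasePow c 1 = c := by
  by_cases hc : c = 0 <;> simp [phasePow, hc]

lemma norm_phasePow (c : ℂ) {e : ℂ} (he : 0 < e.re) : ‖phasePow c e‖ = ‖c‖ ^ e.re := by
  by_cases hc : c = 0
  · simp [phasePow, hc, Real.zero_rpow he.ne']
  · have hc' : 0 < ‖c‖ := norm_pos_iff.mpr hc
    simp [phasePow, hc, Complex.norm_cpow_eq_rpow_re_of_pos hc', hc'.ne']

lemma differentiable_phasePow (c : ℂ) {f : ℂ → ℂ} (hf : Differentiable ℂ f) :
    Differentiable ℂ fun z => phasePow c (f z) := by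
  by_cases hc : c = 0
  · simp [phasePow, hc]
  · simp only [phasePow, if_neg hc]
    exact (hf.const_cpow (Or.inl (by simpa using hc))).const_mul _

lemma norm_phasePow_one_add_div (c z : ℂ) {θ : ℝ} (hθ : 0 ≤ θ) (hz : 0 ≤ z.re) :
    ‖phasePow c ((1 + z) / (1 + θ))‖ = ‖c‖ ^ ((1 + z.re) / (1 + θ)) := by
  have hre : ((1 + z) / (1 + θ)).re = (1 + z.re) / (1 + θ) := by
    simp only [← Complex.ofReal_one, ← Complex.ofReal_add, Complex.div_ofReal_re, Complex.add_re,
      Complex.ofReal_re]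
  rw [norm_phasePow _ (by rw [hre]; positivity), hre]

def holderDual (q : ℝ) (y : κ → ℂ) : κ → ℂ := fun j => star (y j) * ((‖y j‖ ^ (q - 2) : ℝ) : ℂ)

lemma norm_holderDual_apply {q : ℝ} (hq : q ≠ 1) (y : κ → ℂ) (j : κ) :
    ‖holderDual q y j‖ = ‖y j‖ ^ (q - 1) := by
  rw [holderDual, norm_mul, norm_star, Complex.norm_real, Real.norm_of_nonneg (by positivity),
    ← Real.rpow_one_add' (norm_nonneg _) (by contrapose! hq; linarith)]
  ring_nf

variable [Fintype ι] [Fintype κ]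

lemma norm_dotProduct_mulVec_le_of_norm_apply_le {M : Matrix κ ι ℂ} {c : ℝ}
    (hM : ∀ j k, ‖M j k‖ ≤ c) (a : κ → ℂ) (b : ι → ℂ) :
    ‖a ⬝ᵥ M *ᵥ b‖ ≤ c * ((∑ j, ‖a j‖) * ∑ k, ‖b k‖) := by
  rw [sum_mul_sum, mul_sum]
  simp only [dotProduct, mulVec, mul_sum]
  refine (norm_sum_le _ _).trans <| sum_le_sum fun j _ => (norm_sum_le _ _).trans <|
    sum_le_sum fun k _ => ?_
  rw [norm_mul, norm_mul, mul_left_comm c]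
  gcongr
  exact hM j k

lemma norm_dotProduct_mulVec_le_of_contraction {M : Matrix κ ι ℂ}
    (hM : ∀ u, ∑ j, ‖(M *ᵥ u) j‖ ^ 2 ≤ ∑ k, ‖u k‖ ^ 2) (a : κ → ℂ) (b : ι → ℂ) :
    ‖a ⬝ᵥ M *ᵥ b‖ ≤ √(∑ j, ‖a j‖ ^ 2) * √(∑ k, ‖b k‖ ^ 2) :=
  calc ‖a ⬝ᵥ M *ᵥ b‖ ≤ ∑ j, ‖a j‖ * ‖(M *ᵥ b) j‖ :=
        (norm_sum_le _ _).trans_eq (by simp only [norm_mul])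
    _ ≤ √(∑ j, ‖a j‖ ^ 2) * √(∑ j, ‖(M *ᵥ b) j‖ ^ 2) := Real.sum_mul_le_sqrt_mul_sqrt _ _ _
    _ ≤ √(∑ j, ‖a j‖ ^ 2) * √(∑ k, ‖b k‖ ^ 2) := by gcongr; exact hM b

/-- At `z = θ` this is `w ⬝ᵥ M *ᵥ v`; on the lines `re z = 0` and `re z = 1` the entries have
moduli `‖·‖ ^ (p / 2)` and `‖·‖ ^ p`, where `p = 2 / (1 + θ)`. -/
def interpPairing (M : Matrix κ ι ℂ) (w : κ → ℂ) (v : ι → ℂ) (θ : ℝ) (z : ℂ) : ℂ :=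
  (fun j => phasePow (w j) ((1 + z) / (1 + θ))) ⬝ᵥ M *ᵥ fun k => phasePow (v k) ((1 + z) / (1 + θ))

variable (M : Matrix κ ι ℂ) (w : κ → ℂ) (v : ι → ℂ) {θ : ℝ}

lemma interpPairing_self (hθ : 0 ≤ θ) : interpPairing M w v θ θ = w ⬝ᵥ M *ᵥ v := by
  have h : ((1 : ℂ) + θ) / (1 + θ) = 1 := div_self (by exact_mod_cast (by linarith : 1 + θ ≠ 0))
  simp only [interpPairing, h, phasePow_one]

lemma differentiable_interpPairing : Differentiable ℂ (interpPairing M w v θ) := by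
  have h : ∀ c : ℂ, Differentiable ℂ fun z : ℂ => phasePow c ((1 + z) / (1 + θ)) := fun c =>
    differentiable_phasePow c ((differentiable_const 1).add differentiable_id |>.div_const _)
  unfold interpPairing
  simp only [dotProduct, mulVec]
  fun_prop

lemma norm_interpPairing_le_of_re_eq_zero {M} (hM : ∀ u, ∑ j, ‖(M *ᵥ u) j‖ ^ 2 ≤ ∑ k, ‖u k‖ ^ 2)
    (hθ : 0 ≤ θ) {z : ℂ} (hz : z.re = 0) :
    ‖interpPairing M w v θ z‖ ≤
      √(∑ j, ‖w j‖ ^ (2 / (1 + θ))) * √(∑ k, ‖v k‖ ^ (2 / (1 + θ))) := by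
  have hsq : ∀ x : ℂ, ‖phasePow x ((1 + z) / (1 + θ))‖ ^ 2 = ‖x‖ ^ (2 / (1 + θ)) := fun x => by
    rw [norm_phasePow_one_add_div x z hθ hz.ge, ← Real.rpow_mul_natCast (norm_nonneg _), hz]
    congr 1; ring
  refine (norm_dotProduct_mulVec_le_of_contraction hM _ _).trans_eq ?_
  simp only [hsq]

lemma norm_interpPairing_le_of_re_eq_one {M} {c : ℝ} (hM : ∀ j k, ‖M j k‖ ≤ c) (hθ : 0 ≤ θ)
    {z : ℂ} (hz : z.re = 1) :
    ‖interpPairing M w v θ z‖ ≤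
      c * ((∑ j, ‖w j‖ ^ (2 / (1 + θ))) * ∑ k, ‖v k‖ ^ (2 / (1 + θ))) := by
  have hnorm : ∀ x : ℂ, ‖phasePow x ((1 + z) / (1 + θ))‖ = ‖x‖ ^ (2 / (1 + θ)) := fun x => by
    rw [norm_phasePow_one_add_div x z hθ (by simp [hz]), hz, one_add_one_eq_two]
  refine (norm_dotProduct_mulVec_le_of_norm_apply_le hM _ _).trans_eq ?_
  simp only [hnorm]

open Complex.HadamardThreeLines in
lemma bddAbove_norm_interpPairing {M} {c : ℝ} (hc : 0 ≤ c) (hM : ∀ j k, ‖M j k‖ ≤ c) (hθ : 0 ≤ θ) :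
    BddAbove ((norm ∘ interpPairing M w v θ) '' verticalClosedStrip 0 1) := by
  have hnorm : ∀ (x z : ℂ), z.re ∈ Set.Icc 0 1 → ‖phasePow x ((1 + z) / (1 + θ))‖ ≤
      ‖x‖ ^ (1 / (1 + θ)) + ‖x‖ ^ (2 / (1 + θ)) := fun x z ⟨hz₀, hz₁⟩ => by
    rw [norm_phasePow_one_add_div x z hθ hz₀]
    exact rpow_le_rpow_add_rpow (norm_nonneg _) (by positivity) (by gcongr; linarith)
      (by gcongr; linarith)
  refine ⟨c * ((∑ j, (‖w j‖ ^ (1 / (1 + θ)) + ‖w j‖ ^ (2 / (1 + θ)))) *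
    ∑ k, (‖v k‖ ^ (1 / (1 + θ)) + ‖v k‖ ^ (2 / (1 + θ)))), ?_⟩
  rintro _ ⟨z, hz, rfl⟩
  refine (norm_dotProduct_mulVec_le_of_norm_apply_le hM _ _).trans ?_
  gcongr with j _ k _ <;> exact hnorm _ z hz

variable {M} in
open Complex.HadamardThreeLines in
lemma norm_dotProduct_mulVec_le_interp {c : ℝ} (hc : 0 ≤ c) (hM : ∀ j k, ‖M j k‖ ≤ c)
    (hM₂ : ∀ u, ∑ j, ‖(M *ᵥ u) j‖ ^ 2 ≤ ∑ k, ‖u k‖ ^ 2) (hθ : θ ∈ Set.Ioo 0 1) :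
    ‖w ⬝ᵥ M *ᵥ v‖ ≤
      c ^ θ * ((∑ j, ‖w j‖ ^ (2 / (1 + θ))) * ∑ k, ‖v k‖ ^ (2 / (1 + θ))) ^ ((1 + θ) / 2) := by
  obtain ⟨hθ₀, hθ₁⟩ := hθ
  have h3 := norm_le_interp_of_mem_verticalClosedStrip₀₁' (interpPairing M w v θ)
    (show (θ : ℂ).re ∈ Set.Icc 0 1 by rw [Complex.ofReal_re]; exact ⟨hθ₀.le, hθ₁.le⟩)
    (differentiable_interpPairing M w v).diffContOnCl (bddAbove_norm_interpPairing w v hc hM hθ₀.le)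
    (fun _ hz => norm_interpPairing_le_of_re_eq_zero w v hM₂ hθ₀.le hz)
    (fun _ hz => norm_interpPairing_le_of_re_eq_one w v hM hθ₀.le hz)
  rw [interpPairing_self M w v hθ₀.le, Complex.ofReal_re] at h3
  refine h3.trans_eq ?_
  have hW : 0 ≤ ∑ j, ‖w j‖ ^ (2 / (1 + θ)) := sum_nonneg fun j _ => by positivity
  have hWV := mul_nonneg hW (sum_nonneg fun k (_ : k ∈ univ) => by positivity :
    0 ≤ ∑ k, ‖v k‖ ^ (2 / (1 + θ)))
  rw [← Real.sqrt_mul hW, Real.sqrt_eq_rpow, ← Real.rpow_mul hWV, Real.mul_rpow hc hWV,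
    mul_left_comm, ← Real.rpow_add' hWV (by linarith)]
  ring_nf

lemma holderDual_dotProduct {q : ℝ} (hq : q ≠ 0) (y : κ → ℂ) :
    holderDual q y ⬝ᵥ y = ((∑ j, ‖y j‖ ^ q : ℝ) : ℂ) := by
  push_cast
  refine sum_congr rfl fun j _ => ?_
  rw [holderDual, mul_right_comm, Complex.star_def, Complex.conj_mul', ← Complex.ofReal_pow,
    ← Complex.ofReal_mul, ← Real.rpow_two, ← Real.rpow_add' (norm_nonneg _) (by simpa using hq)]
  norm_num

theorem riesz_thorin_mulVec {M : Matrix κ ι ℂ} {c : ℝ} (hc : 0 ≤ c)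
    (hM : ∀ j k, ‖M j k‖ ≤ c) (hM₂ : ∀ u, ∑ j, ‖(M *ᵥ u) j‖ ^ 2 ≤ ∑ k, ‖u k‖ ^ 2)
    (v : ι → ℂ) {θ : ℝ} (hθ : θ ∈ Set.Ioo 0 1) :
    (∑ j, ‖(M *ᵥ v) j‖ ^ (2 / (1 - θ))) ^ ((1 - θ) / 2) ≤
      c ^ θ * (∑ k, ‖v k‖ ^ (2 / (1 + θ))) ^ ((1 + θ) / 2) := by
  obtain ⟨hθ₀, hθ₁⟩ := hθ
  set q := 2 / (1 - θ) with hq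
  have hq₂ : 2 < q := by rw [hq, lt_div_iff₀ (by linarith)]; linarith
  set Q := ∑ j, ‖(M *ᵥ v) j‖ ^ q
  set V := ∑ k, ‖v k‖ ^ (2 / (1 + θ))
  have hQ₀ : 0 ≤ Q := sum_nonneg fun j _ => by positivity
  have hV : 0 ≤ V := sum_nonneg fun k _ => by positivity
  -- pairing `M v` with its Hölder dual turns the bilinear estimate into one for `Q` alone
  have hdual : ∑ j, ‖holderDual q (M *ᵥ v) j‖ ^ (2 / (1 + θ)) = Q := by
    refine sum_congr rfl fun j _ => ?_
    rw [norm_holderDual_apply (by linarith), ← Real.rpow_mul (norm_nonneg _)]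
    congr 1
    rw [hq]; field_simp; ring
  have hbil : Q ≤ c ^ θ * (Q * V) ^ ((1 + θ) / 2) := by
    have h := norm_dotProduct_mulVec_le_interp (holderDual q (M *ᵥ v)) v hc hM hM₂ ⟨hθ₀, hθ₁⟩
    rwa [hdual, holderDual_dotProduct (by linarith), Complex.norm_real,
      Real.norm_of_nonneg hQ₀] at h
  rcases hQ₀.eq_or_lt with hQ | hQ
  · rw [← hQ, Real.zero_rpow (by linarith)]
    positivity
  · have hsplit : Q = Q ^ ((1 - θ) / 2) * Q ^ ((1 + θ) / 2) := by
      rw [← Real.rpow_add hQ]; ring_nf; rw [Real.rpow_one]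
    rw [Real.mul_rpow hQ.le hV] at hbil
    nth_rewrite 1 [hsplit] at hbil
    rw [← mul_assoc, mul_right_comm] at hbil
    exact le_of_mul_le_mul_right hbil (by positivity)

end RieszThorin

section Entropy

variable {ι κ : Type*} [Fintype ι] [Fintype κ]

def entropy (p : ι → ℝ) : ℝ := ∑ i, negMulLog (p i)

lemma hasDerivAt_sum_rpow {p : ι → ℝ} (hp : ∀ i, 0 ≤ p i) {f : ℝ → ℝ} {f' x : ℝ}
    (hf : HasDerivAt f f' x) (hfx : f x = 1) :
    HasDerivAt (fun y => ∑ i, p i ^ f y) (-f' * entropy p) x := by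
  refine (HasDerivAt.fun_sum fun i _ =>
    hf.const_rpow_of_nonneg (hp i) (by rw [hfx]; norm_num)).congr_deriv ?_
  simp only [entropy, mul_sum, hfx, rpow_one, negMulLog]
  exact sum_congr rfl fun i _ => by ring

lemma sum_rpow_pos {p : ι → ℝ} (hp : ∀ i, 0 ≤ p i) (hp₁ : ∑ i, p i = 1) (s : ℝ) :
    0 < ∑ i, p i ^ s := by
  obtain ⟨i, hi⟩ : ∃ i, 0 < p i := by
    by_contra! h
    linarith [sum_nonpos fun i (_ : i ∈ univ) => h i]
  exact sum_pos' (fun j _ => rpow_nonneg (hp j) s) ⟨i, mem_univ i, rpow_pos_of_pos hi s⟩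

theorem neg_two_mul_log_le_entropy_add_entropy {P : ι → ℝ} {Q : κ → ℝ} (hP : ∀ i, 0 ≤ P i)
    (hP₁ : ∑ i, P i = 1) (hQ : ∀ j, 0 ≤ Q j) (hQ₁ : ∑ j, Q j = 1) {c : ℝ} (hc : 0 < c)
    (h : ∀ θ ∈ Set.Ioo (0 : ℝ) 1, (∑ j, Q j ^ (1 / (1 - θ))) ^ ((1 - θ) / 2) ≤
      c ^ θ * (∑ i, P i ^ (1 / (1 + θ))) ^ ((1 + θ) / 2)) :
    -(2 * log c) ≤ entropy P + entropy Q := by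
  set V := fun θ : ℝ => ∑ i, P i ^ (1 / (1 + θ))
  set W := fun θ : ℝ => ∑ j, Q j ^ (1 / (1 - θ))
  have hV₀ : V 0 = 1 := by simp [V, hP₁]
  have hW₀ : W 0 = 1 := by simp [W, hQ₁]
  have hV : HasDerivAt V (entropy P) 0 := by
    refine (hasDerivAt_sum_rpow hP ((hasDerivAt_const (0 : ℝ) (1 : ℝ)).div
      ((hasDerivAt_id 0).const_add 1) (by norm_num)) (by norm_num)).congr_deriv ?_
    norm_num
  have hW : HasDerivAt W (-entropy Q) 0 := by
    refine (hasDerivAt_sum_rpow hQ ((hasDerivAt_const (0 : ℝ) (1 : ℝ)).div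
      ((hasDerivAt_id 0).const_sub 1) (by norm_num)) (by norm_num)).congr_deriv ?_
    norm_num
  -- `g θ ≥ 0` is the logarithm of the hypothesis; it vanishes at `θ = 0`
  let g := fun θ : ℝ => (1 + θ) / 2 * log (V θ) - (1 - θ) / 2 * log (W θ) + θ * log c
  have hg : HasDerivAt g ((entropy P + entropy Q) / 2 + log c) 0 := by
    have := (((((hasDerivAt_id (0 : ℝ)).const_add 1).div_const 2).mul
      (hV.log (by rw [hV₀]; norm_num))).sub
      ((((hasDerivAt_id (0 : ℝ)).const_sub 1).div_const 2).mul
      (hW.log (by rw [hW₀]; norm_num)))).add ((hasDerivAt_id (0 : ℝ)).mul_const (log c))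
    refine this.congr_deriv ?_
    rw [hV₀, hW₀, log_one, id]
    ring
  have hmin : ∀ θ ∈ Set.Ioo (0 : ℝ) 1, g 0 ≤ g θ := by
    intro θ hθ
    have hVθ := sum_rpow_pos hP hP₁ (1 / (1 + θ))
    have hWθ := sum_rpow_pos hQ hQ₁ (1 / (1 - θ))
    have hlog := log_le_log (by positivity) (h θ hθ)
    rw [log_rpow hWθ, log_mul (by positivity) (by positivity), log_rpow hc, log_rpow hVθ] at hlog
    simp only [g, hV₀, hW₀, log_one]
    linarith
  linarith [hg.nonneg_of_forall_mem_Ioo_le one_pos hmin]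

lemma sum_mul_entropy_le_entropy_sum {w : ι → ℝ} (hw : ∀ i, 0 ≤ w i) (hw₁ : ∑ i, w i = 1)
    {P : ι → κ → ℝ} (hP : ∀ i k, 0 ≤ P i k) :
    ∑ i, w i * entropy (P i) ≤ entropy fun k => ∑ i, w i * P i k := by
  simp only [entropy, mul_sum]
  rw [sum_comm]
  refine sum_le_sum fun k _ => ?_
  simpa using concaveOn_negMulLog.le_map_sum (t := univ) (fun i _ => hw i) hw₁
    (fun i _ => Set.mem_Ici.mpr (hP i k))

variable [DecidableEq ι]

theorem neg_two_mul_log_le_entropy_add_entropy_mulVec {M : Matrix κ ι ℂ} (hM : Mᴴ * M = 1)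
    {c : ℝ} (hc : 0 < c) (hMc : ∀ j k, ‖M j k‖ ≤ c) {v : ι → ℂ} (hv : ∑ k, ‖v k‖ ^ 2 = 1) :
    -(2 * log c) ≤ entropy (fun k => ‖v k‖ ^ 2) + entropy (fun j => ‖(M *ᵥ v) j‖ ^ 2) := by
  have hsq : ∀ (x : ℂ) (s : ℝ), (‖x‖ ^ 2) ^ s = ‖x‖ ^ (2 * s) := fun x s => by
    rw [← rpow_natCast, ← rpow_mul (norm_nonneg x), Nat.cast_ofNat]
  refine neg_two_mul_log_le_entropy_add_entropy (fun k => by positivity) hv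
    (fun j => by positivity) (by rw [sum_norm_sq_mulVec hM, hv]) hc fun θ hθ => ?_
  simp only [hsq, mul_one_div]
  exact riesz_thorin_mulVec hc.le hMc (fun u => (sum_norm_sq_mulVec hM u).le) v hθ

theorem neg_two_mul_log_le_entropy_diag_add_entropy_diag {ρ : Matrix ι ι ℂ} (hρ : IsDensity ρ)
    {M : Matrix κ ι ℂ} (hM : Mᴴ * M = 1) {c : ℝ} (hc : 0 < c) (hMc : ∀ j k, ‖M j k‖ ≤ c) :
    -(2 * log c) ≤ entropy (fun k => (ρ k k).re) + entropy (fun j => ((M * ρ * Mᴴ) j j).re) := by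
  have hH := hρ.1.1
  set w := hH.eigenvalues
  set u := fun i => ⇑(hH.eigenvectorBasis i)
  have hw : ∀ i, 0 ≤ w i := hρ.1.eigenvalues_nonneg
  have hw₁ : ∑ i, w i = 1 := sum_eigenvalues_eq_one hH hρ.2
  have hρ_diag : (fun k => (ρ k k).re) = fun k => ∑ i, w i * ‖u i k‖ ^ 2 := by
    ext k
    simpa using re_mul_mul_conjTranspose_apply_self hH 1 k
  have hMρM_diag : (fun j => ((M * ρ * Mᴴ) j j).re) = fun j => ∑ i, w i * ‖(M *ᵥ u i) j‖ ^ 2 :=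
    funext (re_mul_mul_conjTranspose_apply_self hH M)
  rw [hρ_diag, hMρM_diag]
  calc -(2 * log c) = ∑ i, w i * -(2 * log c) := by rw [← sum_mul, hw₁, one_mul]
    _ ≤ ∑ i, w i * (entropy (fun k => ‖u i k‖ ^ 2) + entropy (fun j => ‖(M *ᵥ u i) j‖ ^ 2)) :=
      sum_le_sum fun i _ => mul_le_mul_of_nonneg_left (neg_two_mul_log_le_entropy_add_entropy_mulVec
        hM hc hMc (sum_norm_sq_eigenvectorBasis hH i)) (hw i)
    _ = ∑ i, w i * entropy (fun k => ‖u i k‖ ^ 2) +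
        ∑ i, w i * entropy (fun j => ‖(M *ᵥ u i) j‖ ^ 2) := by
      simp only [mul_add, sum_add_distrib]
    _ ≤ _ := add_le_add
      (sum_mul_entropy_le_entropy_sum hw hw₁ fun _ _ => by positivity)
      (sum_mul_entropy_le_entropy_sum hw hw₁ fun _ _ => by positivity)

end Entropy

end MaassenUffink

open MaassenUffink

/-- Maassen–Uffink entropic uncertainty relation for the standard
and Fourier bases: H(Z)_ρ + H(X)_ρ ≥ log₂ d. -/
theorem maassen_uffink (d : ℕ) [NeZero d] (ρ : Matrix (Fin d) (Fin d) ℂ)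
    (hρ : IsDensity ρ) :
    (∑ k : Fin d, -((ρ k k).re * Real.logb 2 ((ρ k k).re))) +
      (∑ j : Fin d,
        -((((fourierMat d)ᴴ * ρ * fourierMat d) j j).re *
          Real.logb 2 ((((fourierMat d)ᴴ * ρ * fourierMat d) j j).re)))
      ≥ Real.logb 2 d := by
  have hM : (fourierMat d)ᴴᴴ * (fourierMat d)ᴴ = 1 := by
    rw [conjTranspose_conjTranspose]
    exact mul_eq_one_comm.mp fourierMat_conjTranspose_mul_self
  have hMc : ∀ j k, ‖(fourierMat d)ᴴ j k‖ ≤ (Real.sqrt d)⁻¹ := fun j k => by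
    rw [conjTranspose_apply, norm_star, norm_fourierMat_apply]
  have h := neg_two_mul_log_le_entropy_diag_add_entropy_diag hρ hM
    (inv_pos.2 <| Real.sqrt_pos.2 <| Nat.cast_pos.2 <| NeZero.pos d) hMc
  rw [conjTranspose_conjTranspose, Real.log_inv, Real.log_sqrt d.cast_nonneg] at h
  have hlogb : ∀ x : ℝ, -(x * Real.logb 2 x) = Real.negMulLog x / Real.log 2 := fun x => by
    rw [Real.logb, Real.negMulLog]; ring
  simp only [hlogb]
  rw [← Finset.sum_div, ← Finset.sum_div, ← add_div, ge_iff_le, Real.logb]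
  gcongr
  simp only [entropy] at h
  linarith
end
end
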